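/- Let 𝒞 = C([0,1],ℝ) be the space of continuous real-valued maps on [0,1] with the supremum norm. For every M > 0 there exists a set Γ ⊂ 𝒫¹(𝒞) such that μ_UI(Γ) = 0 and μ_{H,W}(Γ) = M. (Hence the tightness hypothesis in the equality μ_{H,W} = μ_UI cannot be omitted.) -/

import Mathlib

open MeasureTheory

/-- `𝒞 = C([0,1], ℝ)` with the supremum norm. -/
abbrev 𝒞 : Type := C(Set.Icc (0 : ℝ) 1, ℝ)

noncomputable instance : MeasurableSpace 𝒞 := borel 𝒞

instance : BorelSpace 𝒞 := ⟨rfl⟩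

/-- The Wasserstein metric via Kantorovich duality. -/
noncomputable def W {S : Type*} [MetricSpace S] [MeasurableSpace S]
    (P Q : Measure S) : ℝ :=
  sSup {r : ℝ | ∃ f : S → ℝ, LipschitzWith 1 f ∧ r = |(∫ x, f x ∂P) - ∫ x, f x ∂Q|}

/-- `𝒫¹(S)`: Borel probability measures on `S` with finite first moment. -/
def P1 (S : Type*) [MetricSpace S] [MeasurableSpace S] : Set (Measure S) :=
  {P | IsProbabilityMeasure P ∧ ∀ a : S, Integrable (fun x => dist a x) P}

/-- The relative Hausdorff measure of non-compactness for the Wasserstein metric. -/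
noncomputable def muHW {S : Type*} [MetricSpace S] [MeasurableSpace S]
    (Γ : Set (Measure S)) : ℝ :=
  sInf {r : ℝ | ∃ Φ : Finset (Measure S), Φ.Nonempty ∧ ↑Φ ⊆ P1 S ∧
    r = sSup {s : ℝ | ∃ P ∈ Γ, s = sInf {t : ℝ | ∃ Q ∈ Φ, t = W P Q}}}

/-- The measure of non-uniform integrability. -/
noncomputable def muUI {S : Type*} [MetricSpace S] [MeasurableSpace S]
    (Γ : Set (Measure S)) : ℝ :=
  sInf {r : ℝ | ∃ a : S, ∃ B : Set S, Bornology.IsBounded B ∧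
    r = sSup {s : ℝ | ∃ P ∈ Γ, s = ∫ x in Bᶜ, dist a x ∂P}}

/-!
The witness is the family of Dirac masses at the functions `fₙ(t) = M (1 - cos (2ⁿ π t))`.
All `fₙ` lie in the ball of radius `M` around the constant `M`, so `Γ` is carried by one bounded
set and `μ_UI(Γ) = 0`, and the single centre `δ_M` shows `μ_{H,W}(Γ) ≤ M`. On the other hand
`‖fₙ - fₘ‖_∞ ≥ 2M` for `n < m` (evaluate at `t = 2⁻ⁿ`), while `W(δₓ, Q) + W(δ_y, Q) ≥ d(x, y)` for
every `Q`. Given finitely many centres, two of the `δ_{fₙ}` share a nearest centre, and one of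
them is at distance at least `M` from it.
-/

open MeasureTheory Set Metric

section Wasserstein

variable {S : Type*} [MetricSpace S] [MeasurableSpace S]

lemma dirac_mem_P1 [MeasurableSingletonClass S] (x : S) : Measure.dirac x ∈ P1 S :=
  ⟨inferInstance, fun _ => integrable_dirac enorm_lt_top⟩

variable [OpensMeasurableSpace S] {Q : Measure S}

lemma LipschitzWith.integrable_of_mem_P1 (hQ : Q ∈ P1 S) {f : S → ℝ} (hf : LipschitzWith 1 f)
    (a : S) : Integrable f Q := by
  have := hQ.1
  refine ((integrable_const |f a|).add (hQ.2 a)).mono' hf.continuous.aestronglyMeasurable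
    (Filter.Eventually.of_forall fun y => ?_)
  have := hf.dist_le_mul a y
  simp only [NNReal.coe_one, one_mul, Real.dist_eq] at this
  simp only [Pi.add_apply, Real.norm_eq_abs]
  linarith [abs_sub_abs_le_abs_sub (f y) (f a), abs_sub_comm (f a) (f y)]

lemma abs_sub_integral_le_integral_dist (hQ : Q ∈ P1 S) {f : S → ℝ} (hf : LipschitzWith 1 f)
    (x : S) : |f x - ∫ y, f y ∂Q| ≤ ∫ y, dist x y ∂Q := by
  have := hQ.1
  have hfi := hf.integrable_of_mem_P1 hQ x
  calc |f x - ∫ y, f y ∂Q| = |∫ y, (f x - f y) ∂Q| := by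
        rw [integral_sub (integrable_const _) hfi, integral_const, probReal_univ, one_smul]
    _ ≤ ∫ y, |f x - f y| ∂Q := abs_integral_le_integral_abs
    _ ≤ ∫ y, dist x y ∂Q :=
        integral_mono ((integrable_const _).sub hfi).abs (hQ.2 x) fun y => by
          simpa [Real.dist_eq] using hf.dist_le_mul x y

lemma W_dirac_le_integral_dist (hQ : Q ∈ P1 S) (x : S) :
    W (Measure.dirac x) Q ≤ ∫ y, dist x y ∂Q :=
  Real.sSup_le
    (by rintro _ ⟨f, hf, rfl⟩; rw [integral_dirac]; exact abs_sub_integral_le_integral_dist hQ hf x)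
    (integral_nonneg fun _ => dist_nonneg)

lemma W_dirac_dirac_le (x y : S) : W (Measure.dirac x) (Measure.dirac y) ≤ dist x y := by
  simpa [integral_dirac] using W_dirac_le_integral_dist (dirac_mem_P1 y) x

lemma W_dirac_le_dist_add_integral (hQ : Q ∈ P1 S) (x a : S) :
    W (Measure.dirac x) Q ≤ dist x a + ∫ y, dist a y ∂Q := by
  have := hQ.1
  refine (W_dirac_le_integral_dist hQ x).trans ?_
  calc ∫ y, dist x y ∂Q ≤ ∫ y, (dist x a + dist a y) ∂Q :=
        integral_mono (hQ.2 x) ((integrable_const _).add (hQ.2 a)) fun y => dist_triangle x a y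
    _ = dist x a + ∫ y, dist a y ∂Q := by
        rw [integral_add (integrable_const _) (hQ.2 a), integral_const, probReal_univ, one_smul]

lemma abs_sub_integral_le_W_dirac (hQ : Q ∈ P1 S) {f : S → ℝ} (hf : LipschitzWith 1 f) (x : S) :
    |f x - ∫ y, f y ∂Q| ≤ W (Measure.dirac x) Q := by
  refine le_csSup ⟨∫ y, dist x y ∂Q, ?_⟩ ⟨f, hf, by rw [integral_dirac]⟩
  rintro _ ⟨g, hg, rfl⟩
  rw [integral_dirac]
  exact abs_sub_integral_le_integral_dist hQ hg x

/-- Test both Dirac masses against the `1`-Lipschitz function `dist x`. -/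
lemma dist_le_W_dirac_add_W_dirac (hQ : Q ∈ P1 S) (x y : S) :
    dist x y ≤ W (Measure.dirac x) Q + W (Measure.dirac y) Q := by
  have hx := abs_sub_integral_le_W_dirac hQ (LipschitzWith.dist_right x) x
  have hy := abs_sub_integral_le_W_dirac hQ (LipschitzWith.dist_right x) y
  rw [dist_self, zero_sub, abs_neg, abs_of_nonneg (integral_nonneg fun _ => dist_nonneg)] at hx
  linarith [le_abs_self (dist x y - ∫ z, dist x z ∂Q)]

end Wasserstein

section Noncompactness

variable {S : Type*} [MetricSpace S] [MeasurableSpace S]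

lemma muUI_eq_zero_of_measure_compl_eq_zero [Nonempty S] {Γ : Set (Measure S)} {B : Set S}
    (hB : Bornology.IsBounded B) (hΓ : ∀ P ∈ Γ, P Bᶜ = 0) : muUI Γ = 0 := by
  refine IsLeast.csInf_eq ⟨⟨Classical.arbitrary S, B, hB, ?_⟩, ?_⟩
  · refine (le_antisymm (Real.sSup_nonpos ?_) (Real.sSup_nonneg ?_)).symm <;>
      rintro _ ⟨P, hP, rfl⟩ <;>
      simp [Measure.restrict_eq_zero.2 (hΓ P hP)]
  · rintro _ ⟨a, B, -, rfl⟩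
    exact Real.sSup_nonneg (by rintro _ ⟨P, -, rfl⟩; exact integral_nonneg fun _ => dist_nonneg)

lemma sInf_W_eq_inf' (P : Measure S) {Φ : Finset (Measure S)} (hΦ : Φ.Nonempty) :
    sInf {t | ∃ Q ∈ Φ, t = W P Q} = Φ.inf' hΦ (W P) := by
  rw [Finset.inf'_eq_csInf_image]
  congr 1
  ext t
  simp [eq_comm]

lemma muHW_range {ι : Type*} (P : ι → Measure S) :
    muHW (range P) = sInf {r | ∃ Φ : Finset (Measure S), ∃ hΦ : Φ.Nonempty, ↑Φ ⊆ P1 S ∧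
      r = ⨆ i, Φ.inf' hΦ (W (P i))} := by
  unfold muHW
  congr 1
  ext r
  refine exists_congr fun Φ =>
    ⟨fun ⟨hΦ, hΦ1, hr⟩ => ⟨hΦ, hΦ1, ?_⟩, fun ⟨hΦ, hΦ1, hr⟩ => ⟨hΦ, hΦ1, ?_⟩⟩
  all_goals
    rw [hr, iSup]
    congr 1
    ext s
    simp [sInf_W_eq_inf' _ hΦ, eq_comm]

variable [OpensMeasurableSpace S] {ι : Type*} {x : ι → S}

lemma muUI_range_dirac_eq_zero {c : S} {r : ℝ} (hxc : ∀ i, dist (x i) c ≤ r) :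
    muUI (range fun i => Measure.dirac (x i)) = 0 := by
  have : Nonempty S := ⟨c⟩
  refine muUI_eq_zero_of_measure_compl_eq_zero isBounded_closedBall (B := closedBall c r) ?_
  rintro _ ⟨i, rfl⟩
  rw [dirac_eq_zero_iff_not_mem measurableSet_closedBall.compl, notMem_compl_iff]
  exact hxc i

lemma bddAbove_range_inf'_W_dirac {c : S} {r : ℝ} (hxc : ∀ i, dist (x i) c ≤ r)
    {Φ : Finset (Measure S)} (hΦ : Φ.Nonempty) (hΦ1 : ↑Φ ⊆ P1 S) :
    BddAbove (range fun i => Φ.inf' hΦ (W (Measure.dirac (x i)))) := by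
  obtain ⟨Q, hQ⟩ := hΦ
  refine ⟨r + ∫ y, dist c y ∂Q, ?_⟩
  rintro _ ⟨i, rfl⟩
  calc Φ.inf' _ (W (Measure.dirac (x i))) ≤ W (Measure.dirac (x i)) Q := Φ.inf'_le _ hQ
    _ ≤ dist (x i) c + ∫ y, dist c y ∂Q := W_dirac_le_dist_add_integral (hΦ1 hQ) _ _
    _ ≤ r + ∫ y, dist c y ∂Q := by linarith [hxc i]

/-- Pigeonhole: two of the infinitely many `δ_{x i}` share a nearest point of `Φ`. -/
lemma le_iSup_inf'_W_dirac [Infinite ι] {r : ℝ}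
    (hsep : Pairwise fun i j => 2 * r ≤ dist (x i) (x j))
    {Φ : Finset (Measure S)} (hΦ : Φ.Nonempty) (hΦ1 : ↑Φ ⊆ P1 S)
    (hbdd : BddAbove (range fun i => Φ.inf' hΦ (W (Measure.dirac (x i))))) :
    r ≤ ⨆ i, Φ.inf' hΦ (W (Measure.dirac (x i))) := by
  choose Q hQΦ hQ using fun i => Φ.exists_mem_eq_inf' hΦ (W (Measure.dirac (x i)))
  obtain ⟨i, j, hij, hQij⟩ :=
    Finite.exists_ne_map_eq_of_infinite fun i => (⟨Q i, hQΦ i⟩ : Φ)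
  have hQij : Q i = Q j := congrArg Subtype.val hQij
  have hsum : 2 * r ≤
      Φ.inf' hΦ (W (Measure.dirac (x i))) + Φ.inf' hΦ (W (Measure.dirac (x j))) := by
    rw [hQ i, hQ j, ← hQij]
    exact (hsep hij).trans (dist_le_W_dirac_add_W_dirac (hΦ1 (hQΦ i)) _ _)
  linarith [le_ciSup hbdd i, le_ciSup hbdd j]

lemma muHW_range_dirac_eq [Infinite ι] {c : S} {r : ℝ} (hxc : ∀ i, dist (x i) c ≤ r)
    (hsep : Pairwise fun i j => 2 * r ≤ dist (x i) (x j)) :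
    muHW (range fun i => Measure.dirac (x i)) = r := by
  rw [muHW_range]
  have hΦ1 : ↑({Measure.dirac c} : Finset (Measure S)) ⊆ P1 S := by simpa using dirac_mem_P1 c
  refine IsLeast.csInf_eq ⟨⟨{Measure.dirac c}, Finset.singleton_nonempty _, hΦ1, ?_⟩, ?_⟩
  · refine le_antisymm (le_iSup_inf'_W_dirac hsep _ hΦ1 (bddAbove_range_inf'_W_dirac hxc _ hΦ1))
      (ciSup_le fun i => ?_)
    simpa using (W_dirac_dirac_le (x i) c).trans (hxc i)
  · rintro _ ⟨Φ, hΦ, hΦ1, rfl⟩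
    exact le_iSup_inf'_W_dirac hsep hΦ hΦ1 (bddAbove_range_inf'_W_dirac hxc hΦ hΦ1)

end Noncompactness

noncomputable def bump (M : ℝ) (n : ℕ) : 𝒞 :=
  ⟨fun t => M * (1 - Real.cos (2 ^ n * Real.pi * t)), by fun_prop⟩

lemma dist_bump_const_le {M : ℝ} (hM : 0 ≤ M) (n : ℕ) :
    dist (bump M n) (ContinuousMap.const _ M) ≤ M := by
  refine (ContinuousMap.dist_le hM).2 fun t => ?_
  have h1 := Real.neg_one_le_cos (2 ^ n * Real.pi * t)
  have h2 := Real.cos_le_one (2 ^ n * Real.pi * t)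
  simp only [bump, ContinuousMap.coe_mk, ContinuousMap.const_apply, Real.dist_eq, abs_le]
  constructor <;> nlinarith

lemma two_mul_le_dist_bump_of_lt {M : ℝ} (hM : 0 ≤ M) {n m : ℕ} (hnm : n < m) :
    2 * M ≤ dist (bump M n) (bump M m) := by
  have ht : ((2 : ℝ) ^ n)⁻¹ ∈ Icc (0 : ℝ) 1 :=
    ⟨by positivity, inv_le_one_of_one_le₀ (one_le_pow₀ one_le_two)⟩
  obtain ⟨k, rfl⟩ : ∃ k, m = n + k + 1 := ⟨m - n - 1, by omega⟩
  have hn : bump M n ⟨_, ht⟩ = 2 * M := by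
    have : (2 : ℝ) ^ n * Real.pi * ((2 : ℝ) ^ n)⁻¹ = Real.pi := by field_simp
    simp only [bump, ContinuousMap.coe_mk, this, Real.cos_pi]
    ring
  have hm : bump M (n + k + 1) ⟨_, ht⟩ = 0 := by
    have : (2 : ℝ) ^ (n + k + 1) * Real.pi * ((2 : ℝ) ^ n)⁻¹ = (2 ^ k : ℕ) * (2 * Real.pi) := by
      push_cast
      field_simp
      ring
    simp only [bump, ContinuousMap.coe_mk, this, Real.cos_nat_mul_two_pi]
    ring
  calc 2 * M = dist (bump M n ⟨_, ht⟩) (bump M (n + k + 1) ⟨_, ht⟩) := by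
        rw [hn, hm, Real.dist_eq, sub_zero, abs_of_nonneg (by linarith)]
    _ ≤ _ := ContinuousMap.dist_apply_le_dist _

lemma pairwise_two_mul_le_dist_bump {M : ℝ} (hM : 0 ≤ M) :
    Pairwise fun n m => 2 * M ≤ dist (bump M n) (bump M m) := by
  intro n m hnm
  rcases hnm.lt_or_gt with h | h
  · exact two_mul_le_dist_bump_of_lt hM h
  · rw [dist_comm]
    exact two_mul_le_dist_bump_of_lt hM h

/-- For every `M > 0` there is a set `Γ ⊆ 𝒫¹(𝒞)` of probability measures on
`𝒞 = C([0,1],ℝ)` with `μ_UI(Γ) = 0` and `μ_{H,W}(Γ) = M`; hence the tightness hypothesis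
in the equality `μ_{H,W} = μ_UI` cannot be omitted. -/
theorem exists_uniformlyIntegrable_with_muHW_eq (M : ℝ) (hM : 0 < M) :
    ∃ Γ : Set (Measure 𝒞), Γ ⊆ P1 𝒞 ∧ muUI Γ = 0 ∧ muHW Γ = M :=
  ⟨range fun n => Measure.dirac (bump M n), range_subset_iff.2 fun _ => dirac_mem_P1 _,
    muUI_range_dirac_eq_zero (dist_bump_const_le hM.le),
    muHW_range_dirac_eq (dist_bump_const_le hM.le) (pairwise_two_mul_le_dist_bump hM.le)⟩
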